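/- For every n ≥ 0, the sum over all Dyck paths of semilength n of the total weight of their asymmetric peaks equals the sum over all k from 0 to n of the total number of asymmetric peaks over all Dyck paths of semilength k. -/

import Mathlib

/-- Height of the vertex after the first `j` steps of the path `w`
(`true` = up-step `u`, `false` = down-step `d`). -/
def hgt (w : List Bool) (j : ℕ) : ℤ :=
  ((w.take j).count true : ℤ) - ((w.take j).count false : ℤ)

/-- `w` is a Dyck word: equally many `u`'s and `d`'s, and every prefix
has at least as many `u`'s as `d`'s. -/
def IsDyckWord (w : List Bool) : Prop :=
  w.count true = w.count false ∧ ∀ j, 0 ≤ hgt w j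

instance : DecidablePred IsDyckWord := fun w => by
  have : IsDyckWord w ↔ (w.count true = w.count false ∧
      ∀ j ∈ List.range (w.length + 1), 0 ≤ hgt w j) := by
    constructor
    · rintro ⟨h1, h2⟩; exact ⟨h1, fun j _ => h2 j⟩
    · rintro ⟨h1, h2⟩
      refine ⟨h1, fun j => ?_⟩
      rcases le_or_gt j w.length with h | h
      · exact h2 j (List.mem_range.mpr (Nat.lt_succ_of_le h))
      · have : w.take j = w := List.take_of_length_le h.le
        have hw : hgt w j = hgt w w.length := by
          unfold hgt
          rw [this, List.take_of_length_le (le_refl _)]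
        rw [hw]
        exact h2 w.length (List.mem_range.mpr (Nat.lt_succ_of_le (le_refl _)))
  exact decidable_of_iff' _ this

/-- there is a peak (an occurrence of `ud`) at positions `i, i+1`. -/
def isPeakB (w : List Bool) (i : ℕ) : Bool :=
  w.getD i false && !(w.getD (i+1) true)

/-- there is a valley (an occurrence of `du`) at positions `i, i+1`. -/
def isValleyB (w : List Bool) (i : ℕ) : Bool :=
  !(w.getD i true) && w.getD (i+1) false

/-- length of the maximal run of `u`'s ending at position `i`. -/
def upRunL (w : List Bool) (i : ℕ) : ℕ :=
  ((List.range (i+1)).takeWhile (fun k => w.getD (i-k) false)).length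

/-- length of the maximal run of `d`'s starting at position `i`. -/
def downRunR (w : List Bool) (i : ℕ) : ℕ :=
  ((List.range (w.length - i)).takeWhile (fun k => !(w.getD (i+k) true))).length

/-- length of the maximal run of `d`'s ending at position `i`. -/
def downRunL (w : List Bool) (i : ℕ) : ℕ :=
  ((List.range (i+1)).takeWhile (fun k => !(w.getD (i-k) true))).length

/-- length of the maximal run of `u`'s starting at position `i`. -/
def upRunR (w : List Bool) (i : ℕ) : ℕ :=
  ((List.range (w.length - i)).takeWhile (fun k => w.getD (i+k) false)).length

/-- The peak at `i` is symmetric: its maximal mountain `u^a d^b` has `a = b`. -/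
def isSymPeakB (w : List Bool) (i : ℕ) : Bool :=
  isPeakB w i && (upRunL w i == downRunR w (i+1))

/-- The peak at `i` is asymmetric: its maximal mountain `u^a d^b` has `a ≠ b`. -/
def isAsymPeakB (w : List Bool) (i : ℕ) : Bool :=
  isPeakB w i && !(upRunL w i == downRunR w (i+1))

/-- weight of the peak at `i`: `min a b` for its maximal mountain `u^a d^b`. -/
def peakWeight (w : List Bool) (i : ℕ) : ℕ :=
  min (upRunL w i) (downRunR w (i+1))

/-- The valley at `i` is symmetric: the maximal `d^a u^b` containing it has `a = b`. -/
def isSymValleyB (w : List Bool) (i : ℕ) : Bool :=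
  isValleyB w i && (downRunL w i == upRunR w (i+1))

/-- weight of the valley at `i`: the largest `j` with `d^j u^j` through the valley. -/
def valleyWeight (w : List Bool) (i : ℕ) : ℕ :=
  min (downRunL w i) (upRunR w (i+1))

def peakCount (w : List Bool) : ℕ := ((List.range w.length).filter (isPeakB w)).length
def spCount (w : List Bool) : ℕ := ((List.range w.length).filter (isSymPeakB w)).length
def apCount (w : List Bool) : ℕ := ((List.range w.length).filter (isAsymPeakB w)).length
def svalCount (w : List Bool) : ℕ := ((List.range w.length).filter (isSymValleyB w)).length

/-- total weight of the symmetric peaks of `w`. -/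
def spWeight (w : List Bool) : ℕ :=
  (((List.range w.length).filter (isSymPeakB w)).map (peakWeight w)).sum

/-- total weight of the asymmetric peaks of `w`. -/
def apWeight (w : List Bool) : ℕ :=
  (((List.range w.length).filter (isAsymPeakB w)).map (peakWeight w)).sum

/-- total weight of the symmetric valleys of `w`. -/
def svWeight (w : List Bool) : ℕ :=
  (((List.range w.length).filter (isSymValleyB w)).map (valleyWeight w)).sum

/-- positions of the peaks of `w`, from left to right. -/
def peakList (w : List Bool) : List ℕ := (List.range w.length).filter (isPeakB w)

/-- positions of the valleys of `w`, from left to right. -/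
def valleyList (w : List Bool) : List ℕ := (List.range w.length).filter (isValleyB w)

/-- heights of the peaks of `w`, from left to right. -/
def peakHeights (w : List Bool) : List ℤ := (peakList w).map (fun i => hgt w (i+1))

/-- heights of the valleys of `w`, from left to right. -/
def valleyHeights (w : List Bool) : List ℤ := (valleyList w).map (fun i => hgt w (i+1))

/-- number of pairs of adjacent equal entries of a list. -/
def eqAdjCount (l : List ℤ) : ℕ :=
  ((l.zip l.tail).filter (fun p => decide (p.1 = p.2))).length

/-- `sp'`: number of pairs of consecutive valleys of `w` at the same height. -/
def spPrime (w : List Bool) : ℕ := eqAdjCount (valleyHeights w)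

/-- all Bool lists of length `m`, as a Finset. -/
def boolLists (m : ℕ) : Finset (List Bool) :=
  Finset.image (fun f : Fin m → Bool => List.ofFn f) Finset.univ

/-- The (finite) set of Dyck words of semilength `n`. -/
def dyckFinset (n : ℕ) : Finset (List Bool) :=
  (boolLists (2*n)).filter (fun w => IsDyckWord w)


/-!
A peak whose maximal mountain is `u^a d^b` has weight `m = min a b`, and `m` counts the
`t` with `t < m`. For each such `t`, deleting `t` up-steps and `t` down-steps at the apex
(`u^a d^b ↦ u^(a-t) d^(b-t)`) keeps the peak asymmetric and the path Dyck, and it is a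
bijection from the asymmetric peaks of weight `> t` of paths of semilength `n` onto all
asymmetric peaks of paths of semilength `n - t`: the inverse inserts the Dyck word `u^t d^t`
at the apex, and inserting a Dyck word anywhere preserves the Dyck property. Summing over
`t ≤ n` gives the identity.
-/

open scoped Finset

namespace List

variable {α : Type*} [BEq α] [LawfulBEq α]

theorem exists_eq_replicate_append (l : List α) (c : α) :
    ∃ n y, l = replicate n c ++ y ∧ y.head? ≠ some c := by
  refine ⟨(l.takeWhile (· == c)).length, l.dropWhile (· == c), ?_, fun h => ?_⟩
  · conv_lhs => rw [← takeWhile_append_dropWhile (p := (· == c)) (l := l)]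
    congr 1
    exact eq_replicate_iff.2 ⟨rfl, fun b hb => by simpa using mem_takeWhile_imp hb⟩
  · simpa [h] using head?_dropWhile_not (· == c) l

theorem takeWhile_beq_replicate_append {y : List α} {c : α} (hy : y.head? ≠ some c) (a : ℕ) :
    (replicate a c ++ y).takeWhile (· == c) = replicate a c := by
  rw [takeWhile_append_of_pos (by simp [mem_replicate])]
  cases y with
  | nil => simp
  | cons d y => simp_all

theorem sum_map_filter_range {M : Type*} [AddCommMonoid M] (m : ℕ) (p : ℕ → Bool)
    (g : ℕ → M) :
    (((range m).filter p).map g).sum = ∑ i ∈ (Finset.range m).filter (fun i => p i), g i := by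
  simp [Finset.sum, Finset.filter_val, Finset.range_val, Multiset.range]

theorem length_filter_range (m : ℕ) (p : ℕ → Bool) :
    ((range m).filter p).length = #((Finset.range m).filter (fun i => p i)) := by
  simp [Finset.card, Finset.filter_val, Finset.range_val, Multiset.range]

end List

namespace Finset

theorem sum_eq_sum_range_card_filter_lt {α : Type*} {s : Finset α} {f : α → ℕ} {N : ℕ}
    (h : ∀ a ∈ s, f a ≤ N) :
    ∑ a ∈ s, f a = ∑ t ∈ range N, #(s.filter fun a => t < f a) := by
  simp only [card_filter]
  rw [sum_comm]
  refine sum_congr rfl fun a ha => ?_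
  have hrange : (range N).filter (· < f a) = range (f a) := by
    ext t; simp only [mem_filter, mem_range]; have := h a ha; omega
  rw [← card_filter, hrange, card_range]

end Finset

open List

theorem hgt_zero (w : List Bool) : hgt w 0 = 0 := by simp [hgt]

theorem hgt_append_of_le {u : List Bool} (v : List Bool) {j : ℕ} (h : j ≤ u.length) :
    hgt (u ++ v) j = hgt u j := by
  simp [hgt, take_append, Nat.sub_eq_zero_of_le h]

theorem hgt_append_length_add (u v : List Bool) (j : ℕ) :
    hgt (u ++ v) (u.length + j) = hgt u u.length + hgt v j := by
  simp only [hgt, take_length_add_append, take_length, count_append]; push_cast; ring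

theorem IsDyckWord.hgt_length {w : List Bool} (hw : IsDyckWord w) : hgt w w.length = 0 := by
  rw [hgt, take_length, hw.1, sub_self]

theorem isDyckWord_append_append_iff {u v z : List Bool} (hv : IsDyckWord v) :
    IsDyckWord (u ++ v ++ z) ↔ IsDyckWord (u ++ z) := by
  have hcount : (u ++ v ++ z).count true = (u ++ v ++ z).count false ↔
      (u ++ z).count true = (u ++ z).count false := by
    have := hv.1; simp only [count_append]; omega
  have hv0 := hv.hgt_length
  rw [IsDyckWord, IsDyckWord, hcount, append_assoc]
  refine and_congr_right fun _ => ⟨fun h j => ?_, fun h j => ?_⟩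
  · rcases le_or_gt j u.length with hj | hj
    · simpa only [hgt_append_of_le _ hj] using h j
    obtain ⟨k, rfl⟩ := Nat.exists_eq_add_of_le hj.le
    simpa only [hgt_append_length_add, hv0, zero_add] using h (u.length + (v.length + k))
  · rcases le_or_gt j u.length with hj | hj
    · simpa only [hgt_append_of_le _ hj] using h j
    obtain ⟨k, rfl⟩ := Nat.exists_eq_add_of_le hj.le
    rw [hgt_append_length_add]
    rcases le_or_gt k v.length with hk | hk
    · have hu : 0 ≤ hgt u u.length := hgt_append_of_le z le_rfl ▸ h u.length
      rw [hgt_append_of_le _ hk]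
      linarith [hv.2 k]
    obtain ⟨m, rfl⟩ := Nat.exists_eq_add_of_le hk.le
    simpa only [hgt_append_length_add, hv0, zero_add] using h (u.length + m)

theorem isDyckWord_replicate_append_replicate (t : ℕ) :
    IsDyckWord (replicate t true ++ replicate t false) := by
  refine ⟨by simp [count_replicate], fun j => ?_⟩
  simp [hgt, take_append, take_replicate, count_replicate]

theorem upRunL_eq_length_takeWhile {w : List Bool} {i : ℕ} (h : i < w.length) :
    upRunL w i = ((w.take (i + 1)).reverse.takeWhile (· == true)).length := by
  have hmap : (w.take (i + 1)).reverse =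
      (range (i + 1)).map (fun k => w.getD (i - k) false) := by
    refine ext_getElem (by simp; omega) fun k hk _ => ?_
    simp only [length_reverse, length_take] at hk
    simp only [getElem_reverse, length_take, getElem_take, getD_eq_getElem?_getD, getElem_map,
      getElem_range, getElem?_eq_getElem (show i - k < w.length by omega), Option.getD_some]
    congr 1; omega
  rw [upRunL, hmap, takeWhile_map, length_map]
  congr 2; funext k; simp

theorem downRunR_eq_length_takeWhile (w : List Bool) (j : ℕ) :
    downRunR w j = ((w.drop j).takeWhile (· == false)).length := by
  have hmap : w.drop j = (range (w.length - j)).map (fun k => w.getD (j + k) true) :=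
    ext_getElem (by simp) fun k hk _ => by
      simp only [length_drop] at hk
      simp [getD_eq_getElem?_getD, getElem?_eq_getElem (show j + k < w.length by omega)]
  rw [downRunR, hmap, takeWhile_map, length_map]
  congr 2; funext k; simp

def mountain (x : List Bool) (a b : ℕ) (y : List Bool) : List Bool :=
  x ++ replicate a true ++ replicate b false ++ y

/-- `u^a d^b` is the maximal mountain of its peak in `mountain x a b y`; the peak sits at
position `x.length + a - 1`. -/
def IsMaximalMountain (x : List Bool) (a b : ℕ) (y : List Bool) : Prop :=
  0 < a ∧ 0 < b ∧ x.getLast? ≠ some true ∧ y.head? ≠ some false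

theorem length_mountain (x : List Bool) (a b : ℕ) (y : List Bool) :
    (mountain x a b y).length = x.length + a + b + y.length := by
  simp [mountain]; omega

theorem take_mountain (x : List Bool) (a b : ℕ) (y : List Bool) :
    (mountain x a b y).take (x.length + a) = x ++ replicate a true := by
  simp [mountain, take_append]

theorem drop_mountain (x : List Bool) (a b : ℕ) (y : List Bool) :
    (mountain x a b y).drop (x.length + a) = replicate b false ++ y := by
  simp [mountain, drop_append]

namespace IsMaximalMountain

variable {x y : List Bool} {a b : ℕ}

theorem isPeakB (h : IsMaximalMountain x a b y) :
    isPeakB (mountain x a b y) (x.length + a - 1) = true := by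
  obtain ⟨ha, hb, -, -⟩ := h
  simp only [_root_.isPeakB, mountain, append_assoc, getD_eq_getElem?_getD, getElem?_append,
    length_replicate, getElem?_replicate, Bool.and_eq_true, Bool.not_eq_eq_eq_not, Bool.not_true]
  split_ifs <;> first | omega | simp

theorem upRunL (h : IsMaximalMountain x a b y) :
    upRunL (mountain x a b y) (x.length + a - 1) = a := by
  obtain ⟨ha, -, hx, -⟩ := h
  rw [upRunL_eq_length_takeWhile (by simp [length_mountain]; omega),
    Nat.sub_add_cancel (by omega), take_mountain, reverse_append, reverse_replicate,
    takeWhile_beq_replicate_append (by simpa using hx), length_replicate]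

theorem downRunR (h : IsMaximalMountain x a b y) :
    downRunR (mountain x a b y) (x.length + a - 1 + 1) = b := by
  obtain ⟨ha, -, -, hy⟩ := h
  rw [downRunR_eq_length_takeWhile, Nat.sub_add_cancel (by omega), drop_mountain,
    takeWhile_beq_replicate_append hy, length_replicate]

theorem peakWeight (h : IsMaximalMountain x a b y) :
    peakWeight (mountain x a b y) (x.length + a - 1) = min a b := by
  rw [_root_.peakWeight, h.upRunL, h.downRunR]

theorem isAsymPeakB_iff (h : IsMaximalMountain x a b y) :
    isAsymPeakB (mountain x a b y) (x.length + a - 1) = true ↔ a ≠ b := by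
  simp [_root_.isAsymPeakB, h.isPeakB, h.upRunL, h.downRunR]

end IsMaximalMountain

theorem exists_isMaximalMountain_of_isPeakB {w : List Bool} {i : ℕ} (h : isPeakB w i = true) :
    ∃ x a b y, IsMaximalMountain x a b y ∧ w = mountain x a b y ∧ i = x.length + a - 1 := by
  have hup : w[i]? = some true ∧ w[i + 1]? = some false := by
    simp only [isPeakB, Bool.and_eq_true, Bool.not_eq_true', getD_eq_getElem?_getD] at h
    constructor
    · cases hw : w[i]? <;> simp_all
    · cases hw : w[i + 1]? <;> simp_all
  have hi : i + 1 < w.length := by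
    by_contra hc; simp [getElem?_eq_none (show w.length ≤ i + 1 by omega)] at hup
  obtain ⟨a, x', hpre, hx'⟩ := exists_eq_replicate_append (w.take (i + 1)).reverse true
  obtain ⟨b, y, hsuf, hy⟩ := exists_eq_replicate_append (w.drop (i + 1)) false
  have hlast : (w.take (i + 1)).reverse.head? = some true := by
    rw [head?_reverse, getLast?_eq_getElem?, length_take, getElem?_take]
    simpa [show min (i + 1) w.length - 1 = i by omega] using hup.1
  have hfirst : (w.drop (i + 1)).head? = some false := by simpa using hup.2
  have ha : 0 < a := Nat.pos_of_ne_zero fun h0 => hx' (by simpa [hpre, h0] using hlast)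
  have hb : 0 < b := Nat.pos_of_ne_zero fun h0 => hy (by simpa [hsuf, h0] using hfirst)
  have htake : w.take (i + 1) = x'.reverse ++ replicate a true := by
    simpa using congrArg reverse hpre
  refine ⟨x'.reverse, a, b, y, ⟨ha, hb, by simpa using hx', hy⟩, ?_, ?_⟩
  · rw [← take_append_drop (i + 1) w, htake, hsuf]; simp only [mountain, append_assoc]
  · have := congrArg length htake
    simp only [length_take, length_append, length_replicate] at this
    omega

theorem mountain_add_add (x : List Bool) (a b t : ℕ) (y : List Bool) :
    mountain x (a + t) (b + t) y =
      x ++ replicate a true ++ (replicate t true ++ replicate t false) ++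
        (replicate b false ++ y) := by
  rw [mountain, Nat.add_comm b t, replicate_add, replicate_add]
  simp only [append_assoc]

theorem mem_boolLists {w : List Bool} {m : ℕ} : w ∈ boolLists m ↔ w.length = m := by
  simp only [boolLists, Finset.mem_image, Finset.mem_univ, true_and]
  constructor
  · rintro ⟨f, rfl⟩; simp
  · rintro rfl; exact ⟨w.get, ofFn_get w⟩

theorem mem_dyckFinset {w : List Bool} {n : ℕ} :
    w ∈ dyckFinset n ↔ w.length = 2 * n ∧ IsDyckWord w := by
  rw [dyckFinset, Finset.mem_filter, mem_boolLists]

theorem mountain_add_add_mem_dyckFinset_iff {x y : List Bool} {a b n : ℕ} (t : ℕ) :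
    mountain x (a + t) (b + t) y ∈ dyckFinset (n + t) ↔ mountain x a b y ∈ dyckFinset n := by
  rw [mem_dyckFinset, mem_dyckFinset, mountain_add_add,
    isDyckWord_append_append_iff (isDyckWord_replicate_append_replicate t), length_mountain]
  simp only [mountain, length_append, length_replicate, append_assoc]
  constructor <;> rintro ⟨h, hD⟩ <;> exact ⟨by omega, hD⟩

def asymPeaks (n : ℕ) : Finset (List Bool × ℕ) :=
  (dyckFinset n ×ˢ Finset.range (2 * n)).filter fun p => isAsymPeakB p.1 p.2

theorem mem_asymPeaks_iff {n : ℕ} {p : List Bool × ℕ} :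
    p ∈ asymPeaks n ↔ ∃ x a b y, IsMaximalMountain x a b y ∧ a ≠ b ∧
      mountain x a b y ∈ dyckFinset n ∧ p = (mountain x a b y, x.length + a - 1) := by
  constructor
  · obtain ⟨w, i⟩ := p
    simp only [asymPeaks, Finset.mem_filter, Finset.mem_product, Finset.mem_range]
    rintro ⟨⟨hw, -⟩, hasym⟩
    have hpeak : isPeakB w i = true := by simp_all [isAsymPeakB]
    obtain ⟨x, a, b, y, h, rfl, rfl⟩ := exists_isMaximalMountain_of_isPeakB hpeak
    exact ⟨x, a, b, y, h, h.isAsymPeakB_iff.1 hasym, hw, rfl⟩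
  · rintro ⟨x, a, b, y, h, hab, hw, rfl⟩
    have hlen := (mem_dyckFinset.1 hw).1
    rw [length_mountain] at hlen
    simp only [asymPeaks, Finset.mem_filter, Finset.mem_product, Finset.mem_range]
    exact ⟨⟨hw, by have := h.1; omega⟩, h.isAsymPeakB_iff.2 hab⟩

theorem peakWeight_le_of_mem_asymPeaks {n : ℕ} {p : List Bool × ℕ} (hp : p ∈ asymPeaks n) :
    peakWeight p.1 p.2 ≤ n := by
  obtain ⟨x, a, b, y, h, -, hw, rfl⟩ := mem_asymPeaks_iff.1 hp
  have hlen := (mem_dyckFinset.1 hw).1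
  rw [length_mountain] at hlen
  rw [h.peakWeight]
  omega

def raisePeak (t : ℕ) (p : List Bool × ℕ) : List Bool × ℕ :=
  (p.1.take (p.2 + 1) ++ (replicate t true ++ replicate t false) ++ p.1.drop (p.2 + 1), p.2 + t)

def lowerPeak (t : ℕ) (p : List Bool × ℕ) : List Bool × ℕ :=
  (p.1.take (p.2 + 1 - t) ++ p.1.drop (p.2 + 1 + t), p.2 - t)

theorem raisePeak_mountain {x y : List Bool} {a : ℕ} (b t : ℕ) (ha : 0 < a) :
    raisePeak t (mountain x a b y, x.length + a - 1) =
      (mountain x (a + t) (b + t) y, x.length + (a + t) - 1) := by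
  rw [raisePeak, Nat.sub_add_cancel (by omega), take_mountain, drop_mountain, mountain_add_add]
  congr 1
  omega

theorem lowerPeak_mountain {x y : List Bool} {a : ℕ} (b t : ℕ) (ha : 0 < a) :
    lowerPeak t (mountain x (a + t) (b + t) y, x.length + (a + t) - 1) =
      (mountain x a b y, x.length + a - 1) := by
  have htake : x.length + (a + t) - 1 + 1 - t = (x ++ replicate a true).length := by
    simp; omega
  have hdrop : x.length + (a + t) - 1 + 1 + t =
      (x ++ replicate a true ++ (replicate t true ++ replicate t false)).length := by
    simp; omega
  rw [lowerPeak, mountain_add_add]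
  dsimp only
  rw [htake, hdrop, drop_left, take_append_of_le_length (by simp), take_left]
  simp only [mountain, append_assoc, Prod.mk.injEq, true_and]
  omega

theorem exists_mountain_add_add_of_lt_peakWeight {n t : ℕ} {p : List Bool × ℕ}
    (hp : p ∈ asymPeaks (n + t)) (ht : t < peakWeight p.1 p.2) :
    ∃ x a b y, IsMaximalMountain x a b y ∧ a ≠ b ∧ mountain x a b y ∈ dyckFinset n ∧
      p = (mountain x (a + t) (b + t) y, x.length + (a + t) - 1) := by
  obtain ⟨x, a, b, y, h, hab, hw, rfl⟩ := mem_asymPeaks_iff.1 hp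
  rw [h.peakWeight, lt_min_iff] at ht
  obtain ⟨a, rfl⟩ := Nat.exists_eq_add_of_le' ht.1.le
  obtain ⟨b, rfl⟩ := Nat.exists_eq_add_of_le' ht.2.le
  exact ⟨x, a, b, y, ⟨by omega, by omega, h.2.2⟩, by omega,
    (mountain_add_add_mem_dyckFinset_iff t).1 hw, rfl⟩

theorem card_filter_lt_peakWeight (n t : ℕ) :
    #((asymPeaks (n + t)).filter fun p => t < peakWeight p.1 p.2) = #(asymPeaks n) := by
  symm
  refine Finset.card_nbij' (raisePeak t) (lowerPeak t) (fun p hp => ?_) (fun q hq => ?_)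
    (fun p hp => ?_) (fun q hq => ?_)
  · obtain ⟨x, a, b, y, ⟨ha, hb, hxy⟩, hab, hw, rfl⟩ := mem_asymPeaks_iff.1 hp
    have h : IsMaximalMountain x (a + t) (b + t) y := ⟨by omega, by omega, hxy⟩
    rw [Finset.mem_coe, Finset.mem_filter, raisePeak_mountain b t ha, h.peakWeight]
    exact ⟨mem_asymPeaks_iff.2 ⟨x, a + t, b + t, y, h, by omega,
      (mountain_add_add_mem_dyckFinset_iff t).2 hw, rfl⟩, by omega⟩
  · rw [Finset.mem_coe, Finset.mem_filter] at hq
    obtain ⟨x, a, b, y, h, hab, hw, rfl⟩ := exists_mountain_add_add_of_lt_peakWeight hq.1 hq.2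
    rw [lowerPeak_mountain b t h.1]
    exact mem_asymPeaks_iff.2 ⟨x, a, b, y, h, hab, hw, rfl⟩
  · obtain ⟨x, a, b, y, h, -, -, rfl⟩ := mem_asymPeaks_iff.1 hp
    rw [raisePeak_mountain b t h.1, lowerPeak_mountain b t h.1]
  · rw [Finset.mem_coe, Finset.mem_filter] at hq
    obtain ⟨x, a, b, y, h, -, -, rfl⟩ := exists_mountain_add_add_of_lt_peakWeight hq.1 hq.2
    rw [lowerPeak_mountain b t h.1, raisePeak_mountain b t h.1]

theorem sum_apWeight_eq_sum_asymPeaks (n : ℕ) :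
    ∑ w ∈ dyckFinset n, apWeight w = ∑ p ∈ asymPeaks n, peakWeight p.1 p.2 := by
  rw [asymPeaks, Finset.sum_filter, Finset.sum_product]
  refine Finset.sum_congr rfl fun w hw => ?_
  rw [apWeight, (mem_dyckFinset.1 hw).1, sum_map_filter_range, Finset.sum_filter]

theorem sum_apCount_eq_card_asymPeaks (n : ℕ) :
    ∑ w ∈ dyckFinset n, apCount w = #(asymPeaks n) := by
  rw [asymPeaks, Finset.card_filter, Finset.sum_product]
  refine Finset.sum_congr rfl fun w hw => ?_
  rw [apCount, (mem_dyckFinset.1 hw).1, length_filter_range, Finset.card_filter]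

/-- For every `n`, the sum over all Dyck paths of semilength `n`
of the total weight of their asymmetric peaks equals the sum over `0 ≤ k ≤ n` of
the total number of asymmetric peaks over all Dyck paths of semilength `k`. -/
theorem total_apWeight_eq_partial_sums_ap (n : ℕ) :
    ∑ w ∈ dyckFinset n, apWeight w =
      ∑ k ∈ Finset.range (n + 1), ∑ w ∈ dyckFinset k, apCount w := by
  calc ∑ w ∈ dyckFinset n, apWeight w
      = ∑ p ∈ asymPeaks n, peakWeight p.1 p.2 := sum_apWeight_eq_sum_asymPeaks n
    _ = ∑ t ∈ Finset.range (n + 1), #((asymPeaks n).filter fun p => t < peakWeight p.1 p.2) :=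
        Finset.sum_eq_sum_range_card_filter_lt fun p hp =>
          (peakWeight_le_of_mem_asymPeaks hp).trans n.le_succ
    _ = ∑ t ∈ Finset.range (n + 1), #(asymPeaks (n - t)) := by
        refine Finset.sum_congr rfl fun t ht => ?_
        rw [← card_filter_lt_peakWeight (n - t) t,
          Nat.sub_add_cancel (Finset.mem_range_succ_iff.1 ht)]
    _ = ∑ k ∈ Finset.range (n + 1), #(asymPeaks k) := by
        simpa using Finset.sum_range_reflect (fun k => #(asymPeaks k)) (n + 1)
    _ = ∑ k ∈ Finset.range (n + 1), ∑ w ∈ dyckFinset k, apCount w := by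
        simp only [sum_apCount_eq_card_asymPeaks]
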